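/- Let W̃ be an extended affine Weyl group with automorphism δ and let w ∈ W̃ be δ-straight, i.e., ℓ(w δ(w) ⋯ δ^{n-1}(w)) = n ℓ(w) for all n ∈ ℕ. Then every element of W̃ obtained from w by a length-preserving δ-twisted conjugation by a simple reflection s (i.e., w' = s w δ(s) with ℓ(w') = ℓ(w)) is again δ-straight. -/

import Mathlib

open scoped Classical

variable (X : Type*) [AddCommGroup X] (W₀ : Type*) [Group W₀] [DistribMulAction W₀ X]

/-- Multiplication in the extended affine Weyl group `W̃ = X ⋊ W₀`, whose elements are
pairs `(λ, u)` representing `t^λ u`. -/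
def eawMul (a b : X × W₀) : X × W₀ := (a.1 + a.2 • b.1, a.2 * b.2)

/-- The finite root `w⁻¹(α)`, i.e. `α` composed with the action of `u`. -/
def rootComp (u : W₀) (α : X →+ ℤ) : X →+ ℤ :=
  α.comp (DistribMulAction.toAddMonoidHom X u)

/-- The Iwahori–Matsumoto length of `t^λ u ∈ W̃`. -/
noncomputable def lenIM (Rplus : Finset (X →+ ℤ)) (w : X × W₀) : ℤ :=
  ∑ α ∈ Rplus, if rootComp X W₀ w.2 α ∈ Rplus then |α w.1| else |α w.1 - 1|

/-- The twisted power `(wδ)^n = w δ(w) ⋯ δ^{n-1}(w)` (as an element of `W̃`). -/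
def twistedPow (δ : X × W₀ → X × W₀) (w : X × W₀) : ℕ → X × W₀
  | 0 => (0, 1)
  | n + 1 => eawMul X W₀ w (δ (twistedPow δ w n))

/-- `w` is `δ`-straight: `ℓ(w δ(w) ⋯ δ^{n-1}(w)) = n ℓ(w)` for all `n`. -/
def IsStraight (Rplus : Finset (X →+ ℤ)) (δ : X × W₀ → X × W₀) (w : X × W₀) : Prop :=
  ∀ n : ℕ, lenIM X W₀ Rplus (twistedPow X W₀ δ w n) = n * lenIM X W₀ Rplus w

/-!
The Iwahori–Matsumoto length satisfies the triangle inequality, so `n ↦ ℓ((w'δ)^n)` is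
subadditive and at most `n ℓ(w')`. Since `s` is an involution, `w = s w' δ(s)`, and the twisted
powers of `w` and `w'` differ only by the factors `s` and `δⁿ(s)` on the two sides; hence
`ℓ((w'δ)^n) ≥ n ℓ(w) - 2 ℓ(s)`. A subadditive sequence squeezed between `n c - C` and `n c` equals
`n c`: a defect at `n` would grow to a defect `k` at `k n`.
-/

theorem apply_mul_le_of_subadditive {f : ℕ → ℤ} (hsub : ∀ m n, f (m + n) ≤ f m + f n)
    (h0 : f 0 ≤ 0) (k n : ℕ) : f (k * n) ≤ k * f n := by
  induction k with
  | zero => simpa using h0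
  | succ k ih =>
    calc f ((k + 1) * n) = f (k * n + n) := by rw [Nat.succ_mul]
      _ ≤ f (k * n) + f n := hsub _ _
      _ ≤ (k + 1 : ℕ) * f n := by push_cast; linarith

theorem eq_mul_of_subadditive_of_le_add {f : ℕ → ℤ} {c C : ℤ}
    (hsub : ∀ m n, f (m + n) ≤ f m + f n) (h0 : f 0 ≤ 0) (h1 : f 1 ≤ c)
    (hge : ∀ n : ℕ, n * c ≤ f n + C) (n : ℕ) : f n = n * c := by
  have hle : f n ≤ n * c :=
    calc f n = f (n * 1) := by rw [mul_one]
      _ ≤ n * f 1 := apply_mul_le_of_subadditive hsub h0 n 1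
      _ ≤ n * c := by gcongr
  refine le_antisymm hle (not_lt.mp fun hlt => ?_)
  set k : ℕ := C.toNat + 1
  have hkC : C < k := by have := Int.self_le_toNat C; push_cast [k]; omega
  have hmul := apply_mul_le_of_subadditive hsub h0 k n
  have hdefect : (k : ℤ) * f n ≤ k * (n * c - 1) := by gcongr; omega
  have hlower := hge (k * n)
  push_cast at hlower
  linarith

section

variable {X W₀}

local infixl:70 " ⋆ " => eawMul _ _

theorem eawMul_assoc (a b c : X × W₀) : a ⋆ b ⋆ c = a ⋆ (b ⋆ c) := by
  simp [eawMul, mul_smul, smul_add, add_assoc, mul_assoc]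

theorem one_eawMul (a : X × W₀) : ((0 : X), (1 : W₀)) ⋆ a = a := by simp [eawMul]

theorem eawMul_one (a : X × W₀) : a ⋆ ((0 : X), (1 : W₀)) = a := by simp [eawMul]

theorem eq_one_of_eawMul_self {p : X × W₀} (h : p ⋆ p = p) : p = (0, 1) := by
  obtain ⟨h1, h2⟩ := Prod.ext_iff.mp h
  have hu : p.2 = 1 := by simpa [eawMul] using h2
  have hx : p.1 = 0 := by simpa [eawMul, hu] using h1
  exact Prod.ext hx hu

theorem rootComp_apply (u : W₀) (α : X →+ ℤ) (x : X) : rootComp X W₀ u α x = α (u • x) := rfl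

theorem rootComp_one (α : X →+ ℤ) : rootComp X W₀ 1 α = α := by
  ext x; simp [rootComp_apply]

theorem rootComp_mul (u v : W₀) (α : X →+ ℤ) :
    rootComp X W₀ (u * v) α = rootComp X W₀ v (rootComp X W₀ u α) := by
  ext x; simp [rootComp_apply, mul_smul]

theorem rootComp_neg (u : W₀) (α : X →+ ℤ) :
    rootComp X W₀ u (-α) = -rootComp X W₀ u α := rfl

theorem rootComp_injective (u : W₀) : Function.Injective (rootComp X W₀ u) := by
  intro α β h
  ext x
  simpa [rootComp_apply] using DFunLike.congr_fun h (u⁻¹ • x)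

section PositiveSystem

variable (Rplus : Finset (X →+ ℤ))

local notation "ℓ" => lenIM _ _ Rplus

/-- The shift by `1` in the summands of the Iwahori–Matsumoto length. -/
noncomputable def negIndicator (θ : X →+ ℤ) : ℤ := if θ ∈ Rplus then 0 else 1

noncomputable def posRep (θ : X →+ ℤ) : X →+ ℤ := if θ ∈ Rplus then θ else -θ

noncomputable def imTerm (y : X × W₀) (α : X →+ ℤ) : ℤ :=
  |α y.1 - negIndicator Rplus (rootComp X W₀ y.2 α)|

variable {Rplus}

theorem negIndicator_neg (hdisj : ∀ α ∈ Rplus, -α ∉ Rplus) {θ : X →+ ℤ}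
    (hθ : θ ∈ Rplus ∨ -θ ∈ Rplus) : negIndicator Rplus (-θ) = 1 - negIndicator Rplus θ := by
  rcases hθ with h | h
  · simp [negIndicator, h, hdisj θ h]
  · have : θ ∉ Rplus := fun hθ => hdisj θ hθ h
    simp [negIndicator, h, this]

theorem posRep_mem {θ : X →+ ℤ} (hθ : θ ∈ Rplus ∨ -θ ∈ Rplus) : posRep Rplus θ ∈ Rplus := by
  unfold posRep; split_ifs with h
  · exact h
  · exact hθ.resolve_left h

theorem lenIM_eq_sum_imTerm (y : X × W₀) : ℓ y = ∑ α ∈ Rplus, imTerm Rplus y α := by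
  refine Finset.sum_congr rfl fun α _ => ?_
  unfold imTerm negIndicator
  split_ifs <;> simp

theorem lenIM_one : ℓ ((0 : X), (1 : W₀)) = 0 := by
  rw [lenIM_eq_sum_imTerm]
  refine Finset.sum_eq_zero fun α hα => ?_
  simp [imTerm, negIndicator, rootComp_one, hα]

theorem imTerm_posRep (hdisj : ∀ α ∈ Rplus, -α ∉ Rplus) (y : X × W₀) {θ : X →+ ℤ}
    (hyθ : rootComp X W₀ y.2 θ ∈ Rplus ∨ -rootComp X W₀ y.2 θ ∈ Rplus) :
    imTerm Rplus y (posRep Rplus θ) =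
      |θ y.1 + negIndicator Rplus θ - negIndicator Rplus (rootComp X W₀ y.2 θ)| := by
  by_cases h : θ ∈ Rplus
  · simp [imTerm, posRep, negIndicator, h]
  · have hε : negIndicator Rplus θ = 1 := by simp [negIndicator, h]
    rw [imTerm, posRep, if_neg h, rootComp_neg, negIndicator_neg hdisj hyθ, hε, ← abs_neg]
    congr 1
    simp only [AddMonoidHom.neg_apply]
    ring

/-- The indicator of `x⁻¹(α)` cancels between the two summands on the right. -/
theorem imTerm_eawMul_le (hdisj : ∀ α ∈ Rplus, -α ∉ Rplus)
    (hstab : ∀ u : W₀, ∀ α ∈ Rplus,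
      rootComp X W₀ u α ∈ Rplus ∨ -(rootComp X W₀ u α) ∈ Rplus)
    (x y : X × W₀) {α : X →+ ℤ} (hα : α ∈ Rplus) :
    imTerm Rplus (x ⋆ y) α ≤
      imTerm Rplus x α + imTerm Rplus y (posRep Rplus (rootComp X W₀ x.2 α)) := by
  have hxy := hstab (x.2 * y.2) α hα
  rw [rootComp_mul] at hxy
  rw [imTerm_posRep hdisj y hxy]
  set β := rootComp X W₀ x.2 α
  calc imTerm Rplus (x ⋆ y) α
      = |(α x.1 - negIndicator Rplus β) +
          (β y.1 + negIndicator Rplus β - negIndicator Rplus (rootComp X W₀ y.2 β))| := by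
        simp only [imTerm, eawMul, map_add, rootComp_mul, β, rootComp_apply]
        ring_nf
    _ ≤ _ := abs_add_le _ _

/-- `α ↦ ±u⁻¹(α)` permutes the positive roots. -/
theorem sum_posRep_rootComp_le (hdisj : ∀ α ∈ Rplus, -α ∉ Rplus)
    (hstab : ∀ u : W₀, ∀ α ∈ Rplus,
      rootComp X W₀ u α ∈ Rplus ∨ -(rootComp X W₀ u α) ∈ Rplus)
    (u : W₀) {f : (X →+ ℤ) → ℤ} (hf : ∀ α, 0 ≤ f α) :
    ∑ α ∈ Rplus, f (posRep Rplus (rootComp X W₀ u α)) ≤ ∑ α ∈ Rplus, f α := by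
  have hinj : Set.InjOn (fun α => posRep Rplus (rootComp X W₀ u α)) Rplus := by
    intro α hα α' hα' h
    simp only [posRep] at h
    split_ifs at h
    · exact rootComp_injective u h
    · obtain rfl := rootComp_injective u (h.trans (rootComp_neg u α').symm)
      exact (hdisj α' hα' hα).elim
    · obtain rfl := rootComp_injective u ((rootComp_neg u α).trans h)
      exact (hdisj α hα hα').elim
    · exact rootComp_injective u (neg_inj.mp h)
  rw [← Finset.sum_image hinj]
  refine Finset.sum_le_sum_of_subset_of_nonneg ?_ fun β _ _ => hf β
  intro β hβ
  obtain ⟨α, hα, rfl⟩ := Finset.mem_image.mp hβ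
  exact posRep_mem (hstab u α hα)

theorem lenIM_eawMul_le (hdisj : ∀ α ∈ Rplus, -α ∉ Rplus)
    (hstab : ∀ u : W₀, ∀ α ∈ Rplus,
      rootComp X W₀ u α ∈ Rplus ∨ -(rootComp X W₀ u α) ∈ Rplus)
    (x y : X × W₀) : ℓ (x ⋆ y) ≤ ℓ x + ℓ y := by
  have hreindex := sum_posRep_rootComp_le (f := imTerm Rplus y) hdisj hstab x.2
    fun _ => abs_nonneg _
  rw [lenIM_eq_sum_imTerm, lenIM_eq_sum_imTerm, lenIM_eq_sum_imTerm]
  calc ∑ α ∈ Rplus, imTerm Rplus (x ⋆ y) α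
      ≤ ∑ α ∈ Rplus, (imTerm Rplus x α + imTerm Rplus y (posRep Rplus (rootComp X W₀ x.2 α))) :=
        Finset.sum_le_sum fun α hα => imTerm_eawMul_le hdisj hstab x y hα
    _ ≤ _ := by
        rw [Finset.sum_add_distrib]
        exact add_le_add le_rfl hreindex

end PositiveSystem

section TwistedPowers

variable {δ : X × W₀ → X × W₀}

theorem lenIM_iterate {Rplus : Finset (X →+ ℤ)}
    (hδlen : ∀ a, lenIM X W₀ Rplus (δ a) = lenIM X W₀ Rplus a) (k : ℕ) (a : X × W₀) :
    lenIM X W₀ Rplus (δ^[k] a) = lenIM X W₀ Rplus a := by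
  induction k with
  | zero => rfl
  | succ k ih => rw [Function.iterate_succ_apply', hδlen, ih]

variable (hδmul : ∀ a b, δ (a ⋆ b) = δ a ⋆ δ b)
include hδmul

theorem map_one_of_map_eawMul : δ (0, 1) = (0, 1) :=
  eq_one_of_eawMul_self (by rw [← hδmul, eawMul_one])

theorem twistedPow_one (v : X × W₀) : twistedPow X W₀ δ v 1 = v := by
  rw [twistedPow, twistedPow, map_one_of_map_eawMul hδmul, eawMul_one]

theorem twistedPow_add (v : X × W₀) (m n : ℕ) :
    twistedPow X W₀ δ v (m + n) = twistedPow X W₀ δ v m ⋆ δ^[m] (twistedPow X W₀ δ v n) := by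
  induction m with
  | zero => simp [twistedPow, one_eawMul]
  | succ m ih =>
    rw [Nat.add_right_comm, twistedPow, ih, hδmul, twistedPow, eawMul_assoc,
      Function.iterate_succ_apply']

theorem eawMul_self_map_eq_one {s : X × W₀} (hs : s ⋆ s = (0, 1)) : δ s ⋆ δ s = (0, 1) := by
  rw [← hδmul, hs, map_one_of_map_eawMul hδmul]

theorem twistedConj_twistedConj {s : X × W₀} (hs : s ⋆ s = (0, 1)) (v : X × W₀) :
    s ⋆ (s ⋆ v ⋆ δ s) ⋆ δ s = v := by
  simp only [eawMul_assoc, eawMul_self_map_eq_one hδmul hs, eawMul_one]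
  rw [← eawMul_assoc, hs, one_eawMul]

theorem twistedPow_twistedConj {s : X × W₀} (hs : s ⋆ s = (0, 1)) (v : X × W₀) (n : ℕ) :
    twistedPow X W₀ δ (s ⋆ v ⋆ δ s) n = s ⋆ twistedPow X W₀ δ v n ⋆ δ^[n] s := by
  induction n with
  | zero => simp [twistedPow, eawMul_one, hs]
  | succ n ih =>
    rw [twistedPow, ih, hδmul, hδmul, twistedPow, Function.iterate_succ_apply']
    simp only [eawMul_assoc]
    rw [← eawMul_assoc (δ s) (δ s), eawMul_self_map_eq_one hδmul hs, one_eawMul]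

variable {Rplus : Finset (X →+ ℤ)}
  (hdisj : ∀ α ∈ Rplus, -α ∉ Rplus)
  (hstab : ∀ u : W₀, ∀ α ∈ Rplus,
    rootComp X W₀ u α ∈ Rplus ∨ -(rootComp X W₀ u α) ∈ Rplus)
  (hδlen : ∀ a, lenIM X W₀ Rplus (δ a) = lenIM X W₀ Rplus a)
include hdisj hstab hδlen

local notation "ℓ" => lenIM _ _ Rplus

theorem lenIM_twistedPow_add_le (v : X × W₀) (m n : ℕ) :
    ℓ (twistedPow X W₀ δ v (m + n)) ≤ ℓ (twistedPow X W₀ δ v m) + ℓ (twistedPow X W₀ δ v n) := by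
  rw [twistedPow_add hδmul, ← lenIM_iterate hδlen m (twistedPow X W₀ δ v n)]
  exact lenIM_eawMul_le hdisj hstab _ _

theorem lenIM_twistedPow_twistedConj_le {s : X × W₀} (hs : s ⋆ s = (0, 1)) (v : X × W₀)
    (n : ℕ) : ℓ (twistedPow X W₀ δ (s ⋆ v ⋆ δ s) n) ≤ ℓ (twistedPow X W₀ δ v n) + 2 * ℓ s := by
  rw [twistedPow_twistedConj hδmul hs]
  have hleft := lenIM_eawMul_le hdisj hstab s (twistedPow X W₀ δ v n)
  have hright := lenIM_eawMul_le hdisj hstab (s ⋆ twistedPow X W₀ δ v n) (δ^[n] s)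
  rw [lenIM_iterate hδlen] at hright
  linarith

end TwistedPowers

end

theorem straight_preserved_by_length_preserving_conj
    (Rplus : Finset (X →+ ℤ))
    (hdisj : ∀ α ∈ Rplus, -α ∉ Rplus)
    (hstab : ∀ u : W₀, ∀ α ∈ Rplus,
      rootComp X W₀ u α ∈ Rplus ∨ -(rootComp X W₀ u α) ∈ Rplus)
    (δ : X × W₀ → X × W₀)
    (hδmul : ∀ a b, δ (eawMul X W₀ a b) = eawMul X W₀ (δ a) (δ b))
    (hδlen : ∀ a, lenIM X W₀ Rplus (δ a) = lenIM X W₀ Rplus a)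
    (s w w' : X × W₀)
    (hs : eawMul X W₀ s s = ((0 : X), (1 : W₀)))
    (hw' : w' = eawMul X W₀ (eawMul X W₀ s w) (δ s))
    (hlen : lenIM X W₀ Rplus w' = lenIM X W₀ Rplus w)
    (hstraight : IsStraight X W₀ Rplus δ w) :
    IsStraight X W₀ Rplus δ w' := by
  have hw : w = eawMul X W₀ (eawMul X W₀ s w') (δ s) := by
    rw [hw', twistedConj_twistedConj hδmul hs]
  intro n
  rw [hlen]
  refine eq_mul_of_subadditive_of_le_add (C := 2 * lenIM X W₀ Rplus s)
    (lenIM_twistedPow_add_le hδmul hdisj hstab hδlen w') ?_ ?_ (fun n => ?_) n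
  · simp [twistedPow, lenIM_one]
  · rw [twistedPow_one hδmul, hlen]
  · calc (n : ℤ) * lenIM X W₀ Rplus w = lenIM X W₀ Rplus (twistedPow X W₀ δ w n) :=
          (hstraight n).symm
      _ ≤ _ := hw ▸ lenIM_twistedPow_twistedConj_le hδmul hdisj hstab hδlen hs w' n
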